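/- arXiv:1903.03868 — 10 statements merged into one kernel-verified Lean document; each statement's English description precedes it below -/
import Mathlib

section
/- Let M be an endoregular R-module and N ≤ M a submodule. Then N is finitely M-generated (i.e., there is an epimorphism M^(n) → N for some n > 0) if and only if N is a direct summand of M. -/
/-!
If `s * t * s = s` then `s * t` is an idempotent with the same range as `s`, so in an endoregular
module every image of an endomorphism is a direct summand. These images are closed under finite
sums: for an idempotent `e` and any `f`, `range e ⊔ range f = range e ⊔ range ((1 - e) * f)`, and
an idempotent `k` with the range of `(1 - e) * f` satisfies `e * k = 0`, so `e + k * (1 - e)` is an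
idempotent with range `range e ⊔ range k`. The image of a map `Mⁿ → M` is the sum of the images of
its restrictions to the `n` coordinates, hence a summand. Conversely, a projection onto a summand
is an epimorphism `M → N`.
-/

/-- `M` is endoregular: its endomorphism ring is von Neumann regular. -/
def IsEndoregular (R M : Type*) [Ring R] [AddCommGroup M] [Module R M] : Prop :=
  ∀ s : Module.End R M, ∃ t : Module.End R M, s * t * s = s

open LinearMap

section

variable {R M : Type*} [Ring R] [AddCommGroup M] [Module R M]

theorem range_eq_iSup_range_comp_single {ι : Type*} [Finite ι] [DecidableEq ι]
    {φ : ι → Type*} [∀ i, AddCommGroup (φ i)] [∀ i, Module R (φ i)]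
    (f : ((i : ι) → φ i) →ₗ[R] M) : range f = ⨆ i, range (f ∘ₗ single R φ i) := by
  simp_rw [range_comp, ← Submodule.map_iSup, iSup_range_single, Submodule.map_top]

theorem exists_isIdempotentElem_range_eq_sup_of_mul_eq_zero {e k : Module.End R M}
    (he : IsIdempotentElem e) (hk : IsIdempotentElem k) (hek : e * k = 0) :
    ∃ g : Module.End R M, IsIdempotentElem g ∧ range g = range e ⊔ range k := by
  set g := e + k * (1 - e)
  have hge : g * e = e := by
    simp only [g, add_mul, mul_assoc, sub_mul, one_mul, he.eq, sub_self, mul_zero, add_zero]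
  have hgk : g * k = k := by
    simp only [g, add_mul, mul_assoc, sub_mul, one_mul, hek, sub_zero, hk.eq, zero_add]
  have hg : IsIdempotentElem g := by
    show g * (e + k * (1 - e)) = g
    rw [mul_add, ← mul_assoc, hge, hgk]
  refine ⟨g, hg, le_antisymm ?_ (sup_le ?_ ?_)⟩
  · exact (range_add_le _ _).trans (sup_le_sup_left (range_comp_le_range _ _) _)
  · exact (hg.comp_eq_right_iff e).mp hge
  · exact (hg.comp_eq_right_iff k).mp hgk

namespace IsEndoregular

variable (hM : IsEndoregular R M)
include hM

theorem exists_isIdempotentElem_range_eq (s : Module.End R M) :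
    ∃ e : Module.End R M, IsIdempotentElem e ∧ range e = range s := by
  obtain ⟨t, hst⟩ := hM s
  refine ⟨s * t, ?_, le_antisymm (range_comp_le_range _ _) ?_⟩
  · show s * t * (s * t) = s * t
    rw [← mul_assoc, hst]
  · conv_lhs => rw [← hst]
    exact range_comp_le_range _ _

theorem exists_isIdempotentElem_range_eq_sup {e : Module.End R M} (he : IsIdempotentElem e)
    (f : Module.End R M) :
    ∃ g : Module.End R M, IsIdempotentElem g ∧ range g = range e ⊔ range f := by
  obtain ⟨k, hk, hku⟩ := hM.exists_isIdempotentElem_range_eq ((1 - e) * f)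
  have hek : e * k = 0 := by
    have heu : e * ((1 - e) * f) = 0 := by
      rw [← mul_assoc, mul_sub, mul_one, he.eq, sub_self, zero_mul]
    rwa [Module.End.mul_eq_comp, ← range_le_ker_iff, hku, range_le_ker_iff]
  have hsup : range e ⊔ range ((1 - e) * f) = range e ⊔ range f := by
    refine le_antisymm (sup_le le_sup_left ?_) (sup_le le_sup_left ?_)
    · rintro _ ⟨x, rfl⟩
      rw [Module.End.mul_apply, LinearMap.sub_apply, Module.End.one_apply]
      exact sub_mem (Submodule.mem_sup_right (mem_range_self f x))
        (Submodule.mem_sup_left (mem_range_self e (f x)))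
    · rintro _ ⟨x, rfl⟩
      rw [show f x = e (f x) + ((1 - e) * f) x by simp]
      exact add_mem (Submodule.mem_sup_left (mem_range_self e _))
        (Submodule.mem_sup_right (mem_range_self _ x))
  rw [← hsup, ← hku]
  exact exists_isIdempotentElem_range_eq_sup_of_mul_eq_zero he hk hek

theorem exists_isIdempotentElem_range_eq_iSup {ι : Type*} [Finite ι] (s : ι → Module.End R M) :
    ∃ g : Module.End R M, IsIdempotentElem g ∧ range g = ⨆ i, range (s i) := by
  have := Fintype.ofFinite ι
  rw [← Finset.sup_univ_eq_iSup]
  refine Finset.sup_induction (p := fun P ↦ ∃ g, IsIdempotentElem g ∧ range g = P)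
    ⟨0, .zero, range_zero⟩ ?_ fun i _ ↦ hM.exists_isIdempotentElem_range_eq (s i)
  rintro _ ⟨e, he, rfl⟩ _ ⟨f, -, rfl⟩
  exact hM.exists_isIdempotentElem_range_eq_sup he f

theorem exists_isCompl_range {ι : Type*} [Finite ι] (f : (ι → M) →ₗ[R] M) :
    ∃ C : Submodule R M, IsCompl (range f) C := by
  classical
  obtain ⟨g, hg, hgf⟩ :=
    hM.exists_isIdempotentElem_range_eq_iSup fun i ↦ f ∘ₗ single R (fun _ ↦ M) i
  exact ⟨ker g, range_eq_iSup_range_comp_single f ▸ hgf ▸ hg.isCompl⟩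

end IsEndoregular
end

theorem stmt_2 {R M : Type*} [Ring R] [AddCommGroup M] [Module R M]
    (hM : IsEndoregular R M) (N : Submodule R M) :
    (∃ n : ℕ, 0 < n ∧ ∃ ρ : (Fin n → M) →ₗ[R] N, Function.Surjective ρ) ↔
      ∃ C : Submodule R M, IsCompl N C := by
  constructor
  · rintro ⟨n, -, ρ, hρ⟩
    have hN : range (N.subtype ∘ₗ ρ) = N := by
      rw [range_comp, range_eq_top.mpr hρ, Submodule.map_top, Submodule.range_subtype]
    exact hN ▸ hM.exists_isCompl_range _
  · rintro ⟨C, hC⟩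
    exact ⟨1, one_pos, N.projectionOnto C hC ∘ₗ proj 0,
      (N.projectionOnto_surjective hC).comp (Function.surjective_eval 0)⟩
end

section
/- An R-module M is abelian endoregular if and only if M = Ker φ ⊕ Im φ for every φ ∈ End_R(M). -/
/-!
If `φ ψ φ = φ` and idempotents are central, the idempotents `ψ φ` and `φ ψ` commute with `φ`,
so `φ = ψ φ² = φ² ψ`; hence `ker φ² = ker φ` and `im φ² = im φ`, which says exactly that
`M = ker φ ⊕ im φ`. Conversely, if `M = ker φ ⊕ im φ` then `φ` maps the summand `im φ`
isomorphically onto `im φ`, and inverting it there gives a quasi-inverse of `φ`. The decomposition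
also forces `φ² = 0 → φ = 0`, so for an idempotent `e` the square-zero elements `e s (1 - e)` and
`(1 - e) s e` vanish, i.e. `e s = e s e = s e`.
-/

/-- `M` is abelian endoregular: `End_R(M)` is abelian von Neumann regular. -/
def IsAbelianEndoregular (R M : Type*) [Ring R] [AddCommGroup M] [Module R M] : Prop :=
  (∀ s : Module.End R M, ∃ t : Module.End R M, s * t * s = s) ∧
  (∀ e : Module.End R M, e * e = e → ∀ s : Module.End R M, e * s = s * e)

section Ring

variable {S : Type*}

theorem mul_mul_self_eq_of_mul_mul_eq [Monoid S]
    (hcentral : ∀ e : S, e * e = e → ∀ s : S, e * s = s * e) {a b : S} (h : a * b * a = a) :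
    b * a * a = a ∧ a * a * b = a := by
  have hba : b * a * (b * a) = b * a := by rw [mul_assoc, ← mul_assoc a b a, h]
  have hab : a * b * (a * b) = a * b := by rw [← mul_assoc, h]
  constructor
  · rw [hcentral _ hba a, ← mul_assoc, h]
  · rw [mul_assoc, ← hcentral _ hab a, h]

theorem IsIdempotentElem.commute_of_forall_mul_self_eq_zero [Ring S]
    (h : ∀ x : S, x * x = 0 → x = 0) {e : S} (he : IsIdempotentElem e) (s : S) :
    Commute e s := by
  have hl : e * s * (1 - e) = 0 := h _ <| by
    calc e * s * (1 - e) * (e * s * (1 - e)) = e * s * ((1 - e) * e) * (s * (1 - e)) := by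
          noncomm_ring
      _ = 0 := by rw [he.one_sub_mul_self, mul_zero, zero_mul]
  have hr : (1 - e) * s * e = 0 := h _ <| by
    calc (1 - e) * s * e * ((1 - e) * s * e) = (1 - e) * s * (e * (1 - e)) * (s * e) := by
          noncomm_ring
      _ = 0 := by rw [he.mul_one_sub_self, mul_zero, zero_mul]
  calc e * s = e * s * e := by rw [← sub_eq_zero, ← hl]; noncomm_ring
    _ = s * e := by rw [eq_comm, ← sub_eq_zero, ← hr]; noncomm_ring

end Ring

namespace Module.End

open LinearMap

variable {R M : Type*} [Ring R] [AddCommGroup M] [Module R M]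

theorem disjoint_ker_range_iff (f : Module.End R M) :
    Disjoint (ker f) (range f) ↔ ker (f * f) ≤ ker f := by
  rw [Submodule.disjoint_def]
  constructor
  · intro h x hx
    exact mem_ker.mpr (h (f x) hx (mem_range_self f x))
  · rintro h _ hx ⟨y, rfl⟩
    exact h (mem_ker.mpr hx)

theorem codisjoint_ker_range_iff (f : Module.End R M) :
    Codisjoint (ker f) (range f) ↔ range f ≤ range (f * f) := by
  rw [codisjoint_iff, Submodule.eq_top_iff']
  constructor
  · rintro h _ ⟨x, rfl⟩
    obtain ⟨k, hk, _, ⟨y, rfl⟩, rfl⟩ := Submodule.mem_sup.mp (h x)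
    exact ⟨y, by simp [mem_ker.mp hk]⟩
  · intro h x
    obtain ⟨y, hy⟩ := h (mem_range_self f x)
    refine Submodule.mem_sup.mpr ⟨x - f y, ?_, f y, mem_range_self f y, sub_add_cancel x (f y)⟩
    simpa [sub_eq_zero] using hy.symm

theorem isCompl_ker_range_iff (f : Module.End R M) :
    IsCompl (ker f) (range f) ↔ ker (f * f) ≤ ker f ∧ range f ≤ range (f * f) := by
  rw [isCompl_iff, disjoint_ker_range_iff, codisjoint_ker_range_iff]

theorem eq_zero_of_mul_self_eq_zero_of_isCompl {f : Module.End R M}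
    (hf : IsCompl (ker f) (range f)) (h : f * f = 0) : f = 0 := by
  have := ((isCompl_ker_range_iff f).mp hf).1
  rwa [h, ker_zero, top_le_iff, ker_eq_top] at this

end Module.End

namespace LinearMap

variable {R M N : Type*} [Ring R] [AddCommGroup M] [Module R M] [AddCommGroup N] [Module R N]

theorem exists_comp_comp_eq_self_of_isCompl (f : M →ₗ[R] N) {C : Submodule R M}
    {D : Submodule R N} (hC : IsCompl (ker f) C) (hD : IsCompl (range f) D) :
    ∃ g : N →ₗ[R] M, f ∘ₗ g ∘ₗ f = f := by
  let e : C ≃ₗ[R] range f :=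
    (Submodule.quotientEquivOfIsCompl _ _ hC).symm ≪≫ₗ f.quotKerEquivRange
  have he : ∀ c : C, (e c : N) = f c := fun c => by simp [e]
  refine ⟨C.subtype ∘ₗ e.symm ∘ₗ (range f).projectionOnto D hD, ?_⟩
  ext x
  simp [Submodule.projectionOnto_apply_left hD ⟨f x, mem_range_self f x⟩, ← he]

end LinearMap

theorem stmt_3 {R M : Type*} [Ring R] [AddCommGroup M] [Module R M] :
    IsAbelianEndoregular R M ↔
      ∀ φ : Module.End R M, IsCompl (LinearMap.ker φ) (LinearMap.range φ) := by
  constructor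
  · rintro ⟨hreg, hcentral⟩ φ
    obtain ⟨ψ, hψ⟩ := hreg φ
    obtain ⟨hleft, hright⟩ := mul_mul_self_eq_of_mul_mul_eq hcentral hψ
    refine (Module.End.isCompl_ker_range_iff φ).mpr ⟨?_, ?_⟩
    · conv_rhs => rw [← hleft, mul_assoc]
      exact LinearMap.ker_le_ker_comp (φ * φ) ψ
    · conv_lhs => rw [← hright]
      exact LinearMap.range_comp_le_range ψ (φ * φ)
  · intro hcompl
    refine ⟨fun φ => φ.exists_comp_comp_eq_self_of_isCompl (hcompl φ) (hcompl φ).symm,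
      fun e he => IsIdempotentElem.commute_of_forall_mul_self_eq_zero ?_ he⟩
    exact fun x => Module.End.eq_zero_of_mul_self_eq_zero_of_isCompl (hcompl x)
end

section
/- Every direct summand of an abelian endoregular module is abelian endoregular. -/
section Retract

variable {R M N : Type*} [Ring R] [AddCommGroup M] [Module R M] [AddCommGroup N] [Module R N]
  {ι : N →ₗ[R] M} {π : M →ₗ[R] N}

lemma compress_conj_of_retract (h : π ∘ₗ ι = LinearMap.id) (s : Module.End R N) :
    π ∘ₗ (ι ∘ₗ s ∘ₗ π) ∘ₗ ι = s := by
  simp only [← LinearMap.comp_assoc, h, LinearMap.id_comp]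
  simp only [LinearMap.comp_assoc, h, LinearMap.comp_id]

lemma mul_compress_mul_of_retract (h : π ∘ₗ ι = LinearMap.id) (s : Module.End R N)
    (t : Module.End R M) :
    s * (π ∘ₗ t ∘ₗ ι) * s = π ∘ₗ ((ι ∘ₗ s ∘ₗ π) * t * (ι ∘ₗ s ∘ₗ π)) ∘ₗ ι := by
  simp only [Module.End.mul_eq_comp, LinearMap.comp_assoc, h, LinearMap.comp_id]
  simp only [← LinearMap.comp_assoc, h, LinearMap.id_comp]

lemma conj_mul_of_retract (h : π ∘ₗ ι = LinearMap.id) (s t : Module.End R N) :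
    ι ∘ₗ (s * t) ∘ₗ π = (ι ∘ₗ s ∘ₗ π) * (ι ∘ₗ t ∘ₗ π) := by
  simp only [Module.End.mul_eq_comp, LinearMap.comp_assoc]
  rw [← LinearMap.comp_assoc (t ∘ₗ π) ι π, h, LinearMap.id_comp]

lemma IsAbelianEndoregular.of_retract (hM : IsAbelianEndoregular R M)
    (h : π ∘ₗ ι = LinearMap.id) : IsAbelianEndoregular R N := by
  set L : Module.End R N → Module.End R M := fun s => ι ∘ₗ s ∘ₗ π
  have hcompress : ∀ s, π ∘ₗ L s ∘ₗ ι = s := compress_conj_of_retract h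
  have hmul : ∀ s t, L (s * t) = L s * L t := conj_mul_of_retract h
  constructor
  · intro s
    obtain ⟨t, ht⟩ := hM.1 (L s)
    refine ⟨π ∘ₗ t ∘ₗ ι, ?_⟩
    rw [mul_compress_mul_of_retract h, ht, hcompress]
  · intro e he s
    have hLe : L e * L e = L e := by rw [← hmul, he]
    rw [← hcompress (e * s), ← hcompress (s * e), hmul, hmul, hM.2 _ hLe]

end Retract

theorem stmt_4 {R M : Type*} [Ring R] [AddCommGroup M] [Module R M]
    (hM : IsAbelianEndoregular R M) (N : Submodule R M)
    (hN : ∃ C : Submodule R M, IsCompl N C) :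
    IsAbelianEndoregular R N := by
  obtain ⟨C, hC⟩ := hN
  exact hM.of_retract (N.projectionOnto_comp_subtype hC)
end

section
/- An R-module M is abelian endoregular if and only if M is endoregular and every M-generated submodule of M is fully invariant. -/
/-- `N` is an `M`-generated submodule of `M`: it is the sum of the images of
homomorphisms `M → M` landing in `N`. -/
def IsMGenerated {R M : Type*} [Ring R] [AddCommGroup M] [Module R M]
    (N : Submodule R M) : Prop :=
  N = ⨆ f : {f : Module.End R M // LinearMap.range f ≤ N}, LinearMap.range f.val

def IsFullyInvariant {R M : Type*} [Ring R] [AddCommGroup M] [Module R M]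
    (N : Submodule R M) : Prop :=
  ∀ φ : Module.End R M, N.map φ ≤ N

/-!
An idempotent `e` of `End M` commutes with `s` exactly when `range e` and `ker e = range (1 - e)`
are `s`-invariant; both are ranges of endomorphisms, hence `M`-generated. Conversely, in a regular
endomorphism ring `range f = range (f * t)` for the idempotent `f * t` given by `f * t * f = f`;
when idempotents are central this range is fully invariant, and so is every `M`-generated
submodule, being a supremum of such ranges.
-/

theorem isIdempotentElem_mul_of_mul_mul_eq {S : Type*} [Semigroup S] {a b : S}
    (h : a * b * a = a) : IsIdempotentElem (a * b) := by
  rw [IsIdempotentElem, ← mul_assoc, h]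

section

open LinearMap Module.End

variable {R M : Type*} [Ring R] [AddCommGroup M] [Module R M]

theorem isFullyInvariant_iff_forall_mem_invtSubmodule {N : Submodule R M} :
    IsFullyInvariant N ↔ ∀ φ : Module.End R M, N ∈ φ.invtSubmodule := by
  simp only [IsFullyInvariant, mem_invtSubmodule_iff_map_le]

theorem IsFullyInvariant.iSup {ι : Sort*} {N : ι → Submodule R M}
    (h : ∀ i, IsFullyInvariant (N i)) : IsFullyInvariant (⨆ i, N i) := fun φ => by
  rw [Submodule.map_iSup]
  exact iSup_mono fun i => h i φ

theorem isMGenerated_range (f : Module.End R M) : IsMGenerated (range f) :=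
  le_antisymm (le_iSup (fun g : {g : Module.End R M // range g ≤ range f} => range g.val)
    ⟨f, le_rfl⟩) (iSup_le fun g => g.2)

theorem range_mul_eq_of_mul_mul_eq {f t : Module.End R M} (h : f * t * f = f) :
    range (f * t) = range f := by
  refine le_antisymm (range_comp_le_range t f) ?_
  calc range f = range (f * t * f) := by rw [h]
    _ ≤ range (f * t) := range_comp_le_range f (f * t)

theorem isFullyInvariant_range_of_isIdempotentElem {e : Module.End R M} (he : IsIdempotentElem e)
    (hcomm : ∀ φ : Module.End R M, Commute e φ) : IsFullyInvariant (range e) :=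
  isFullyInvariant_iff_forall_mem_invtSubmodule.mpr fun φ =>
    ((LinearMap.IsIdempotentElem.commute_iff he).mp (hcomm φ)).1

theorem IsMGenerated.isFullyInvariant_of_isAbelianEndoregular {N : Submodule R M}
    (hM : IsAbelianEndoregular R M) (hN : IsMGenerated N) : IsFullyInvariant N := by
  rw [hN]
  refine IsFullyInvariant.iSup fun f => ?_
  obtain ⟨t, ht⟩ := hM.1 f.val
  have hidem : IsIdempotentElem (f.val * t) := isIdempotentElem_mul_of_mul_mul_eq ht
  rw [← range_mul_eq_of_mul_mul_eq ht]
  exact isFullyInvariant_range_of_isIdempotentElem hidem (hM.2 _ hidem)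

theorem commute_of_isIdempotentElem_of_forall_isMGenerated
    (hM : ∀ N : Submodule R M, IsMGenerated N → IsFullyInvariant N) {e : Module.End R M}
    (he : IsIdempotentElem e) (s : Module.End R M) : Commute e s := by
  rw [LinearMap.IsIdempotentElem.commute_iff he,
    LinearMap.IsIdempotentElem.ker_eq_range_one_sub he]
  exact ⟨isFullyInvariant_iff_forall_mem_invtSubmodule.mp (hM _ (isMGenerated_range e)) s,
    isFullyInvariant_iff_forall_mem_invtSubmodule.mp (hM _ (isMGenerated_range (1 - e))) s⟩

end

theorem stmt_6 {R M : Type*} [Ring R] [AddCommGroup M] [Module R M] :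
    IsAbelianEndoregular R M ↔
      ((∀ s : Module.End R M, ∃ t : Module.End R M, s * t * s = s) ∧
        ∀ N : Submodule R M, IsMGenerated N → IsFullyInvariant N) :=
  ⟨fun hM => ⟨hM.1, fun _ hN => hN.isFullyInvariant_of_isAbelianEndoregular hM⟩,
    fun ⟨hreg, hM⟩ =>
      ⟨hreg, fun _ he s => commute_of_isIdempotentElem_of_forall_isMGenerated hM he s⟩⟩
end

section
/- Every direct summand of an abelian endoregular module M is a fully invariant submodule of M. -/
theorem Submodule.map_le_of_commute_projection {R M : Type*} [Ring R] [AddCommGroup M]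
    [Module R M] {N C : Submodule R M} (hNC : IsCompl N C) {φ : Module.End R M}
    (h : Commute (N.projection C hNC) φ) : N.map φ ≤ N := by
  have hinv := ((LinearMap.IsIdempotentElem.commute_iff (isIdempotentElem_projection hNC)).mp h).1
  rwa [range_projection, Module.End.mem_invtSubmodule_iff_map_le] at hinv

theorem stmt_7 {R M : Type*} [Ring R] [AddCommGroup M] [Module R M]
    (hM : IsAbelianEndoregular R M) (N : Submodule R M)
    (hN : ∃ C : Submodule R M, IsCompl N C) :
    ∀ φ : Module.End R M, N.map φ ≤ N := by
  obtain ⟨C, hC⟩ := hN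
  intro φ
  exact Submodule.map_le_of_commute_projection hC
    (hM.2 _ (Submodule.isIdempotentElem_projection hC).eq φ)
end

section
/- Let M be a unit endoregular R-module. If M = Im φ + Ker φ for every φ ∈ End_R(M), then M is abelian endoregular. -/
theorem IsIdempotentElem.commute_of_isReduced {R : Type*} [Ring R] [IsReduced R] {e : R}
    (he : IsIdempotentElem e) (s : R) : Commute e s := by
  have hleft : e * s * (1 - e) = 0 := IsReduced.eq_zero _ ⟨2, by
    simp only [pow_two, mul_assoc]
    rw [← mul_assoc (1 - e) e, he.one_sub_mul_self, zero_mul, mul_zero, mul_zero]⟩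
  have hright : (1 - e) * s * e = 0 := IsReduced.eq_zero _ ⟨2, by
    simp only [pow_two, mul_assoc]
    rw [← mul_assoc e (1 - e), he.mul_one_sub_self, zero_mul, mul_zero, mul_zero]⟩
  have hes : e * s = e * s * e := by rwa [mul_one_sub, sub_eq_zero] at hleft
  have hse : s * e = e * s * e := by rwa [one_sub_mul, sub_mul, sub_eq_zero] at hright
  exact hes.trans hse.symm

namespace Module.End

variable {R M : Type*} [Ring R] [AddCommGroup M] [Module R M]

theorem eq_zero_of_mul_self_eq_zero_of_range_sup_ker {f : Module.End R M}
    (hf : LinearMap.range f ⊔ LinearMap.ker f = ⊤) (hff : f * f = 0) : f = 0 := by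
  have hrange : LinearMap.range f ≤ LinearMap.ker f := by
    rintro _ ⟨x, rfl⟩
    exact LinearMap.congr_fun hff x
  rw [sup_eq_right.mpr hrange] at hf
  exact LinearMap.ker_eq_top.mp hf

theorem isReduced_of_range_sup_ker
    (h : ∀ φ : Module.End R M, LinearMap.range φ ⊔ LinearMap.ker φ = ⊤) :
    IsReduced (Module.End R M) :=
  (isReduced_iff_pow_one_lt 2 one_lt_two).mpr fun f hf =>
    eq_zero_of_mul_self_eq_zero_of_range_sup_ker (h f) (by rwa [pow_two] at hf)

end Module.End

theorem stmt_11 {R M : Type*} [Ring R] [AddCommGroup M] [Module R M]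
    (hM : ∀ s : Module.End R M, ∃ u : (Module.End R M)ˣ, s * (u : Module.End R M) * s = s)
    (h : ∀ φ : Module.End R M, LinearMap.range φ ⊔ LinearMap.ker φ = ⊤) :
    IsAbelianEndoregular R M := by
  have := Module.End.isReduced_of_range_sup_ker h
  refine ⟨fun s => ?_, fun e he s => (IsIdempotentElem.commute_of_isReduced he s).eq⟩
  obtain ⟨u, hu⟩ := hM s
  exact ⟨u, hu⟩
end

section
/- Let M be a unit endoregular R-module. If every idempotent in End_R(M) commutes with every automorphism of M, then M is abelian endoregular. -/
namespace IsIdempotentElem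

variable {A : Type*} [Ring A] {e : A}

lemma isNilpotent_mul_mul_one_sub (he : IsIdempotentElem e) (r : A) :
    IsNilpotent (e * r * (1 - e)) :=
  ⟨2, by
    rw [pow_two, show e * r * (1 - e) * (e * r * (1 - e)) = e * r * ((1 - e) * e) * (r * (1 - e))
      by noncomm_ring, he.one_sub_mul_self, mul_zero, zero_mul]⟩

lemma mul_mul_one_sub_eq_zero_of_forall_units_commute (he : IsIdempotentElem e)
    (hu : ∀ u : Aˣ, Commute e u) (r : A) : e * r * (1 - e) = 0 := by
  set x := e * r * (1 - e)
  obtain ⟨u, hux⟩ := (he.isNilpotent_mul_mul_one_sub r).isUnit_one_add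
  have hcomm : e * (1 + x) = (1 + x) * e := hux ▸ hu u
  have hex : e * x = x := by simp only [x, ← mul_assoc, he.eq]
  have hxe : x * e = 0 := by simp only [x, mul_assoc, he.one_sub_mul_self, mul_zero]
  rwa [mul_add, add_mul, mul_one, one_mul, hex, hxe, add_zero, add_eq_left] at hcomm

lemma commute_of_forall_units_commute (he : IsIdempotentElem e)
    (hu : ∀ u : Aˣ, Commute e u) (r : A) : Commute e r := by
  have hleft : e * r * (1 - e) = 0 := he.mul_mul_one_sub_eq_zero_of_forall_units_commute hu r
  have hright : (1 - e) * r * e = 0 := by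
    simpa only [sub_sub_cancel] using he.one_sub.mul_mul_one_sub_eq_zero_of_forall_units_commute
      (fun u => (Commute.one_left _).sub_left (hu u)) r
  rw [mul_sub, mul_one, sub_eq_zero] at hleft
  rw [mul_assoc, sub_mul, one_mul, sub_eq_zero, ← mul_assoc] at hright
  exact hleft.trans hright.symm

end IsIdempotentElem

theorem stmt_12 {R M : Type*} [Ring R] [AddCommGroup M] [Module R M]
    (hM : ∀ s : Module.End R M, ∃ u : (Module.End R M)ˣ, s * (u : Module.End R M) * s = s)
    (h : ∀ e : Module.End R M, e * e = e →
      ∀ u : (Module.End R M)ˣ, e * (u : Module.End R M) = (u : Module.End R M) * e) :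
    IsAbelianEndoregular R M := by
  refine ⟨fun s => ?_, fun e he => IsIdempotentElem.commute_of_forall_units_commute he (h e he)⟩
  obtain ⟨u, hu⟩ := hM s
  exact ⟨u, hu⟩
end

section
/- Let M be an R-module and L a fully invariant direct summand of M. If L ≤ N ≤ M, then L is a fully invariant submodule of N (i.e., α(L) ⊆ L for every α ∈ End_R(N)). -/
theorem Submodule.range_le_of_isCompl_of_forall_map_le {R M : Type*} [Ring R] [AddCommGroup M]
    [Module R M] {L C : Submodule R M} (hC : IsCompl L C)
    (hfi : ∀ φ : Module.End R M, L.map φ ≤ L) (g : L →ₗ[R] M) :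
    LinearMap.range g ≤ L := by
  rintro _ ⟨x, rfl⟩
  -- `g` extends by zero on `C` to an endomorphism of `M`, which preserves `L`.
  refine hfi (LinearMap.ofIsCompl hC g 0) ⟨x, x.2, ?_⟩
  exact LinearMap.ofIsCompl_apply_left hC x

theorem stmt_13 {R M : Type*} [Ring R] [AddCommGroup M] [Module R M]
    (L N : Submodule R M)
    (hfi : ∀ φ : Module.End R M, L.map φ ≤ L)
    (hds : ∃ C : Submodule R M, IsCompl L C)
    (hLN : L ≤ N) :
    ∀ α : Module.End R N, (L.comap N.subtype).map α ≤ L.comap N.subtype := by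
  intro α
  obtain ⟨C, hC⟩ := hds
  rintro _ ⟨x, hx, rfl⟩
  exact Submodule.range_le_of_isCompl_of_forall_map_le hC hfi
    (N.subtype ∘ₗ α ∘ₗ Submodule.inclusion hLN) ⟨⟨x, hx⟩, rfl⟩
end

section
/- Let {M_i}_{i∈I} be a family of R-modules. Then ⊕_{i∈I} M_i is abelian endoregular if and only if each M_i is abelian endoregular and each M_i is a fully invariant submodule of ⊕_{i∈I} M_i. -/
/-!
The summand `M i` is the corner `e End(⨁ M) e` of the projection `e` onto it, and von Neumann
regularity as well as centrality of idempotents pass to corners; centrality of `e` itself says that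
every endomorphism preserves `M i`. Conversely, full invariance of all summands makes every
endomorphism of `⨁ M` diagonal, so `End(⨁ M) ≅ ∏ End(M i)` and both properties hold componentwise.
-/

open DirectSum

section Retract

variable {R M N : Type*} [Ring R] [AddCommGroup M] [Module R M] [AddCommGroup N] [Module R N]
  {l : N →ₗ[R] M} {p : M →ₗ[R] N}

lemma comp_corner_comp (hpl : ∀ x, p (l x) = x) (s : Module.End R N) :
    p ∘ₗ (l ∘ₗ s ∘ₗ p) ∘ₗ l = s := by
  ext x
  simp [hpl]

lemma corner_mul_corner (hpl : ∀ x, p (l x) = x) (s t : Module.End R N) :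
    (l ∘ₗ s ∘ₗ p) * (l ∘ₗ t ∘ₗ p) = l ∘ₗ (s * t) ∘ₗ p := by
  ext x
  simp [hpl]

lemma comp_eq_of_idempotents_commute (hpl : ∀ x, p (l x) = x)
    (hab : ∀ e : Module.End R M, e * e = e → ∀ s : Module.End R M, e * s = s * e)
    (φ : Module.End R M) : φ ∘ₗ l = l ∘ₗ (p ∘ₗ φ ∘ₗ l) := by
  have hidem : (l ∘ₗ p) * (l ∘ₗ p) = l ∘ₗ p := by
    ext x
    simp [hpl]
  ext x
  simpa [hpl] using (LinearMap.congr_fun (hab _ hidem φ) (l x)).symm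

theorem IsAbelianEndoregular.of_retract_s15 (hpl : ∀ x, p (l x) = x)
    (h : IsAbelianEndoregular R M) : IsAbelianEndoregular R N := by
  obtain ⟨hreg, hab⟩ := h
  refine ⟨fun s => ?_, fun e he s => ?_⟩
  · obtain ⟨t, ht⟩ := hreg (l ∘ₗ s ∘ₗ p)
    refine ⟨p ∘ₗ t ∘ₗ l, ?_⟩
    ext x
    simpa [hpl] using congrArg p (LinearMap.congr_fun ht (l x))
  · have hcorner := hab _ (by rw [corner_mul_corner hpl, he]) (l ∘ₗ s ∘ₗ p)
    rw [corner_mul_corner hpl, corner_mul_corner hpl] at hcorner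
    simpa only [comp_corner_comp hpl] using congrArg (fun f => p ∘ₗ f ∘ₗ l) hcorner

end Retract

namespace DirectSum

variable {R I : Type*} [Ring R] {M : I → Type*} [∀ i, AddCommGroup (M i)] [∀ i, Module R (M i)]

lemma lmap_mul (f g : ∀ i, Module.End R (M i)) : lmap f * lmap g = lmap (f * g) :=
  (lmap_comp g f).symm

variable [DecidableEq I]

lemma lmap_inj {f g : ∀ i, Module.End R (M i)} : lmap f = lmap g ↔ f = g := by
  refine ⟨fun hfg => ?_, congrArg lmap⟩
  ext i x
  simpa using congrArg (fun φ => component R I M i (φ (lof R I M i x))) hfg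

lemma exists_eq_lmap_of_map_range_lof_le (φ : Module.End R (⨁ i, M i))
    (hφ : ∀ i, (LinearMap.range (lof R I M i)).map φ ≤ LinearMap.range (lof R I M i)) :
    ∃ f : ∀ i, Module.End R (M i), φ = lmap f := by
  refine ⟨fun i => component R I M i ∘ₗ φ ∘ₗ lof R I M i, linearMap_ext R fun i => ?_⟩
  ext x
  obtain ⟨y, hy⟩ := hφ i (Submodule.mem_map_of_mem (LinearMap.mem_range_self _ x))
  simp [← hy]

theorem isAbelianEndoregular_of_forall_eq_lmap (h : ∀ i, IsAbelianEndoregular R (M i))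
    (hdiag : ∀ φ : Module.End R (⨁ i, M i), ∃ f, φ = lmap f) :
    IsAbelianEndoregular R (⨁ i, M i) := by
  refine ⟨fun φ => ?_, fun e he s => ?_⟩
  · obtain ⟨f, rfl⟩ := hdiag φ
    choose t ht using fun i => (h i).1 (f i)
    exact ⟨lmap t, by rw [lmap_mul, lmap_mul]; exact congrArg lmap (funext ht)⟩
  · obtain ⟨f, rfl⟩ := hdiag e
    obtain ⟨g, rfl⟩ := hdiag s
    have hf : f * f = f := lmap_inj.mp (by rw [← lmap_mul, he])
    rw [lmap_mul, lmap_mul]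
    exact congrArg lmap (funext fun i => (h i).2 (f i) (congrFun hf i) (g i))

end DirectSum

theorem stmt_15 {R : Type*} [Ring R] {I : Type*} [DecidableEq I]
    (M : I → Type*) [∀ i, AddCommGroup (M i)] [∀ i, Module R (M i)] :
    IsAbelianEndoregular R (⨁ i, M i) ↔
      ((∀ i, IsAbelianEndoregular R (M i)) ∧
        ∀ i, ∀ φ : Module.End R (⨁ i, M i),
          (LinearMap.range (DirectSum.lof R I M i)).map φ ≤
            LinearMap.range (DirectSum.lof R I M i)) := by
  constructor
  · intro h
    refine ⟨fun i => h.of_retract_s15 (component.lof_self (R := R) (M := M) i), fun i φ => ?_⟩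
    rw [← LinearMap.range_comp,
      comp_eq_of_idempotents_commute (component.lof_self (R := R) (M := M) i) h.2 φ]
    exact LinearMap.range_comp_le_range _ _
  · rintro ⟨h, hinv⟩
    exact isAbelianEndoregular_of_forall_eq_lmap h
      fun φ => exists_eq_lmap_of_map_range_lof_le φ (hinv · φ)
end

section
/- If E(M), the injective hull of an R-module M, is abelian endoregular, then every essentially closed submodule of M is fully invariant in M and End_R(M) is a reduced ring. -/
/-- `N` is essential in `P` (as submodules of `M`). -/
def IsEssentialIn {R M : Type*} [Ring R] [AddCommGroup M] [Module R M]
    (N P : Submodule R M) : Prop :=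
  N ≤ P ∧ ∀ Q : Submodule R M, Q ≤ P → N ⊓ Q = ⊥ → Q = ⊥

theorem exists_maximal_disjoint {α : Type*} [CompleteLattice α] [IsCompactlyGenerated α]
    (a : α) : ∃ c, Maximal (Disjoint a) c := by
  obtain ⟨c, -, hc⟩ := zorn_le_nonempty₀ {c | Disjoint a c}
    (fun s hs hchain y hy => ⟨sSup s, hchain.directedOn.disjoint_sSup_right.2 hs,
      fun _ hz => le_sSup hz⟩) ⊥ disjoint_bot_right
  exact ⟨c, hc⟩

theorem Maximal.eq_bot_of_disjoint_sup {α : Type*} [Lattice α] [OrderBot α] [IsModularLattice α]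
    {a c b : α} (hc : Maximal (Disjoint a) c) (hb : Disjoint (a ⊔ c) b) : b = ⊥ := by
  have hcb : c = c ⊔ b :=
    hc.eq_of_le (hc.prop.disjoint_sup_right_of_disjoint_sup_left hb) le_sup_left
  have hbc : b ≤ a ⊔ c := (le_sup_right.trans hcb.ge).trans le_sup_right
  exact hb.symm.eq_bot_of_le hbc

universe v

theorem Module.Injective.exists_comp_eq {R M : Type*} {N E : Type v} [Ring R] [AddCommGroup M]
    [Module R M] [AddCommGroup N] [Module R N] [AddCommGroup E] [Module R E]
    (hE : Module.Injective R E)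
    (ι : M →ₗ[R] N) (hι : Function.Injective ι) (g : M →ₗ[R] E) :
    ∃ h : N →ₗ[R] E, h ∘ₗ ι = g := by
  let e := LinearEquiv.ofInjective ι hι
  obtain ⟨h, hh⟩ := hE.out (LinearMap.range ι).subtype (Submodule.injective_subtype _)
    (g ∘ₗ e.symm.toLinearMap)
  refine ⟨h, LinearMap.ext fun m => ?_⟩
  simpa [e] using hh (e m)

section

variable {R E : Type*} [Ring R] [AddCommGroup E] [Module R E]

theorem IsAbelianEndoregular.exists_central_idempotent (habe : IsAbelianEndoregular R E)
    (s : Module.End R E) :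
    ∃ f : Module.End R E, IsIdempotentElem f ∧ (∀ u, f * u = u * f) ∧ f * s = s ∧
      ∀ x, s x = 0 → f x = 0 := by
  obtain ⟨t, hts⟩ := habe.1 s
  have hidem : IsIdempotentElem (t * s) := by
    rw [IsIdempotentElem, mul_assoc t s, ← mul_assoc s t s, hts]
  have hcent := habe.2 _ hidem
  refine ⟨t * s, hidem, hcent, by rw [hcent, ← mul_assoc, hts], fun x hx => ?_⟩
  rw [Module.End.mul_apply, hx, map_zero]

theorem IsAbelianEndoregular.apply_eq_zero_of_apply_apply_eq_zero
    (habe : IsAbelianEndoregular R E) {s : Module.End R E} {x : E} (hx : s (s x) = 0) :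
    s x = 0 := by
  obtain ⟨f, -, -, hfs, hker⟩ := habe.exists_central_idempotent s
  rw [← hfs, Module.End.mul_apply, hker _ hx]

end

section

variable {R E : Type*} [Ring R] [AddCommGroup E] [Module R E]

theorem Module.Injective.exists_projection_of_disjoint (hE : Module.Injective R E)
    {K C : Submodule R E} (hKC : Disjoint K C) :
    ∃ s : Module.End R E, (∀ x ∈ K, s x = x) ∧ ∀ x ∈ C, s x = 0 := by
  have hinj : Function.Injective (K.subtype.coprod C.subtype) := by
    rw [← LinearMap.ker_eq_bot, LinearMap.ker_coprod_of_disjoint_range, Submodule.ker_subtype,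
      Submodule.ker_subtype, Submodule.prod_bot]
    simpa using hKC
  obtain ⟨s, hs⟩ := hE.out _ hinj (K.subtype ∘ₗ LinearMap.fst R K C)
  exact ⟨s, fun x hx => by simpa using hs (⟨x, hx⟩, 0),
    fun x hx => by simpa using hs (0, ⟨x, hx⟩)⟩

theorem IsAbelianEndoregular.exists_central_idempotent_isEssentialIn
    (hE : Module.Injective R E) (habe : IsAbelianEndoregular R E) (K : Submodule R E) :
    ∃ f : Module.End R E, IsIdempotentElem f ∧ (∀ u, f * u = u * f) ∧
      IsEssentialIn K (LinearMap.range f) := by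
  obtain ⟨C, hC⟩ := exists_maximal_disjoint K
  obtain ⟨s, hsK, hsC⟩ := hE.exists_projection_of_disjoint hC.prop
  obtain ⟨f, hidem, hcent, hfs, hker⟩ := habe.exists_central_idempotent s
  have hKf : K ≤ LinearMap.range f := fun x hx =>
    ⟨s x, by rw [← Module.End.mul_apply, hfs, hsK x hx]⟩
  refine ⟨f, hidem, hcent, hKf, fun Q hQf hKQ => hC.eq_bot_of_disjoint_sup ?_⟩
  -- `f` is the identity on `range f ⊇ Q` and the projection onto `K` along `C` on `K ⊔ C`.
  rw [disjoint_iff, eq_bot_iff, ← hKQ]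
  intro x hx
  obtain ⟨hxKC, hxQ⟩ := Submodule.mem_inf.1 hx
  obtain ⟨k, hk, c, hc, rfl⟩ := Submodule.mem_sup.1 hxKC
  have hfx : f (k + c) = k := by
    rw [map_add, (LinearMap.IsIdempotentElem.mem_range_iff hidem).1 (hKf hk),
      hker c (hsC c hc), add_zero]
  have hkx : k = k + c :=
    hfx.symm.trans ((LinearMap.IsIdempotentElem.mem_range_iff hidem).1 (hQf hxQ))
  exact Submodule.mem_inf.2 ⟨hkx ▸ hk, hxQ⟩

end

theorem IsEssentialIn.comap_of_injective {R M E : Type*} [Ring R] [AddCommGroup M] [Module R M]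
    [AddCommGroup E] [Module R E] {ι : M →ₗ[R] E} (hι : Function.Injective ι)
    {N : Submodule R M} {P : Submodule R E} (h : IsEssentialIn (N.map ι) P) :
    IsEssentialIn N (P.comap ι) := by
  refine ⟨Submodule.map_le_iff_le_comap.1 h.1, fun Q hQ hNQ => ?_⟩
  have hmap : Q.map ι = ⊥ :=
    h.2 _ (Submodule.map_le_iff_le_comap.2 hQ)
      (by rw [← Submodule.map_inf _ hι, hNQ, Submodule.map_bot])
  exact Submodule.map_injective_of_injective hι (hmap.trans (Submodule.map_bot ι).symm)

section

variable {R M E : Type*} [Ring R] [AddCommGroup M] [Module R M] [AddCommGroup E] [Module R E]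

theorem map_le_of_forall_isEssentialIn_eq (hE : Module.Injective R E)
    (habe : IsAbelianEndoregular R E) {ι : M →ₗ[R] E} (hι : Function.Injective ι)
    {N : Submodule R M} (hN : ∀ P : Submodule R M, IsEssentialIn N P → N = P)
    (φ : Module.End R M) :
    N.map φ ≤ N := by
  obtain ⟨ψ, hψ⟩ := hE.exists_comp_eq ι hι (ι ∘ₗ φ)
  obtain ⟨f, hidem, hcent, hess⟩ := habe.exists_central_idempotent_isEssentialIn hE (N.map ι)
  have hNP := hN _ (hess.comap_of_injective hι)
  rintro _ ⟨n, hn, rfl⟩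
  rw [hNP]
  have hfn : f (ι n) = ι n :=
    (LinearMap.IsIdempotentElem.mem_range_iff hidem).1 (hess.1 (Submodule.mem_map_of_mem hn))
  refine ⟨ψ (ι n), ?_⟩
  rw [← Module.End.mul_apply, hcent, Module.End.mul_apply, hfn, ← LinearMap.comp_apply, hψ,
    LinearMap.comp_apply]

theorem isReduced_end_of_isAbelianEndoregular (hE : Module.Injective R E)
    (habe : IsAbelianEndoregular R E)
    {ι : M →ₗ[R] E} (hι : Function.Injective ι) : IsReduced (Module.End R M) := by
  refine (isReduced_iff_pow_one_lt 2 one_lt_two).2 fun φ hφ => LinearMap.ext fun m => ?_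
  obtain ⟨ψ, hψ⟩ := hE.exists_comp_eq ι hι (ι ∘ₗ φ)
  have hψι : ∀ x, ψ (ι x) = ι (φ x) := LinearMap.congr_fun hψ
  have hψψ : ψ (ψ (ι m)) = 0 := by
    rw [hψι, hψι, ← Module.End.mul_apply, ← sq, hφ, LinearMap.zero_apply, map_zero]
  apply hι
  rw [← hψι, habe.apply_eq_zero_of_apply_apply_eq_zero hψψ, LinearMap.zero_apply, map_zero]

end

theorem stmt_19_general {R M E : Type*} [Ring R] [AddCommGroup M] [Module R M]
    [AddCommGroup E] [Module R E]
    (hE : Module.Injective R E) (ι : M →ₗ[R] E) (hι : Function.Injective ι)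
    (habe : IsAbelianEndoregular R E) :
    (∀ N : Submodule R M, (∀ P : Submodule R M, IsEssentialIn N P → N = P) →
      ∀ φ : Module.End R M, N.map φ ≤ N) ∧
    IsReduced (Module.End R M) :=
  ⟨fun _ hN => map_le_of_forall_isEssentialIn_eq hE habe hι hN,
    isReduced_end_of_isAbelianEndoregular hE habe hι⟩

theorem stmt_19 {R M E : Type*} [Ring R] [AddCommGroup M] [Module R M]
    [AddCommGroup E] [Module R E]
    (hE : Module.Injective R E) (ι : M →ₗ[R] E) (hι : Function.Injective ι)
    (hess : ∀ Q : Submodule R E, Q ≠ ⊥ → LinearMap.range ι ⊓ Q ≠ ⊥)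
    (habe : IsAbelianEndoregular R E) :
    (∀ N : Submodule R M, (∀ P : Submodule R M, IsEssentialIn N P → N = P) →
      ∀ φ : Module.End R M, N.map φ ≤ N) ∧
    IsReduced (Module.End R M) :=
  stmt_19_general hE ι hι habe
end
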